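/- arXiv:1611.05258 — 2 statements merged into one kernel-verified Lean document; each statement's English description precedes it below -/
import Mathlib

section
/- For all positive integers M and ν, Σ_{k=1}^{M^ν} d_{ν,M}(k)² ≤ M^ν · ( e·(log M)/ν + e )^{ν²}. -/
/-!
Writing `T = [1, M]^ν`, the sum `∑ d(k)²` counts pairs `(f, g) ∈ T × T` with `∏ f = ∏ g`.
Because `ℕ` is a decomposition monoid with trivial units, every such pair is the pair of
row products and column products of a `ν × ν` matrix of positive integers, and each row of
that matrix has product `f i ≤ M`. Hence the number of pairs is at most `P_ν(M)^ν`, where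
`P_n(x)` counts `n`-tuples of positive integers with product at most `x`.

Splitting off the first coordinate gives `P_{n+1}(x) = ∑_{m ≤ x} P_n(x / m)`. Since
`1 / m ≤ log m - log (m - 1)` and `t ↦ t^{n+1}` is convex, each term `(A - log m)^n / m` is at
most the decrement of `(A - log m)^{n+1} / (n + 1)` from `m - 1` to `m`; telescoping yields
`P_n(x) ≤ x (log x + n)^n / n!` by induction on `n`. Finally `n^n / n! ≤ e^n`.
-/

open Finset

/-- `d_{ν,M}(k)`: the number of `ν`-tuples `(m_1, …, m_ν)` with `1 ≤ m_i ≤ M` and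
`m_1 ⋯ m_ν = k`. -/
noncomputable def multDiv (ν M k : ℕ) : ℕ :=
  Nat.card {f : Fin ν → ℕ // (∀ i, 1 ≤ f i ∧ f i ≤ M) ∧ ∏ i, f i = k}

open Real
open scoped Nat

theorem exists_prod_eq_of_dvd_prod {α ι : Type*} [CommMonoid α] [DecompositionMonoid α]
    [Subsingleton αˣ] [DecidableEq ι] (s : Finset ι) (c : ι → α) {a : α}
    (h : a ∣ ∏ j ∈ s, c j) :
    ∃ u : ι → α, (∀ j, u j ∣ c j) ∧ ∏ j ∈ s, u j = a := by
  induction s using Finset.induction_on generalizing a with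
  | empty =>
    rw [prod_empty, ← isUnit_iff_dvd_one, isUnit_iff_eq_one] at h
    exact ⟨1, fun _ => one_dvd _, by simp [h]⟩
  | @insert j₀ s hj₀ ih =>
    rw [prod_insert hj₀] at h
    obtain ⟨a₁, a₂, ha₁, ha₂, rfl⟩ := exists_dvd_and_dvd_of_dvd_mul h
    obtain ⟨u, hu, hprod⟩ := ih ha₂
    refine ⟨Function.update u j₀ a₁, fun j => ?_, ?_⟩
    · rcases eq_or_ne j j₀ with rfl | hj
      · simpa using ha₁
      · simpa [hj] using hu j
    · rw [prod_insert hj₀, Function.update_self, prod_update_of_notMem hj₀, hprod]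

theorem exists_matrix_prod_rows_cols {α ι : Type*} [CommMonoidWithZero α]
    [IsCancelMulZero α] [DecompositionMonoid α] [Subsingleton αˣ] [Fintype ι] [DecidableEq ι]
    {k : ℕ}    (f : Fin k → α) (g : ι → α) (h : ∏ i, f i = ∏ j, g j) (hg : ∏ j, g j ≠ 0) :
    ∃ b : Fin k → ι → α, (∀ i, ∏ j, b i j = f i) ∧ ∀ j, ∏ i, b i j = g j := by
  induction k generalizing g with
  | zero =>
    refine ⟨Fin.elim0, fun i => i.elim0, fun j => ?_⟩
    rw [Fin.prod_univ_zero] at h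
    rw [Fin.prod_univ_zero, eq_comm, ← isUnit_iff_eq_one, isUnit_iff_dvd_one, h]
    exact dvd_prod_of_mem g (mem_univ j)
  | succ k ih =>
    rw [Fin.prod_univ_succ] at h
    obtain ⟨u, hu, hprod⟩ :=
      exists_prod_eq_of_dvd_prod univ g (a := f 0) (h ▸ dvd_mul_right _ _)
    choose w hw using hu
    have hg' : ∏ j, g j = f 0 * ∏ j, w j := by simp_rw [hw, prod_mul_distrib, hprod]
    have hf₀ : f 0 ≠ 0 := left_ne_zero_of_mul (hg' ▸ hg)
    obtain ⟨b, hrow, hcol⟩ := ih (fun i => f i.succ) w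
      (mul_left_cancel₀ hf₀ (h.trans hg')) (right_ne_zero_of_mul (hg' ▸ hg))
    refine ⟨Fin.cons u b, Fin.cases hprod hrow, fun j => ?_⟩
    simp [Fin.prod_univ_succ, hcol, hw j]

theorem sum_sq_card_fiber_eq_card_filter {α β : Type*} [DecidableEq β]
    {s : Finset α} {t : Finset β} {g : α → β} (hg : Set.MapsTo g s t) :
    ∑ k ∈ t, #{x ∈ s | g x = k} ^ 2 = #{p ∈ s ×ˢ s | g p.1 = g p.2} := by
  rw [card_eq_sum_card_fiberwise (f := fun p => g p.1) (t := t)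
    fun p hp => hg (mem_product.mp (mem_filter.mp hp).1).1]
  refine sum_congr rfl fun k _ => ?_
  rw [sq, ← card_product, filter_filter]
  congr 1
  ext p
  simp only [mem_filter, mem_product]
  constructor
  · rintro ⟨⟨h₁, rfl⟩, h₂, h₁₂⟩
    exact ⟨⟨h₁, h₂⟩, h₁₂.symm, rfl⟩
  · rintro ⟨⟨h₁, h₂⟩, h₁₂, rfl⟩
    exact ⟨⟨h₁, rfl⟩, h₂, h₁₂.symm⟩

def boxTuples (n M : ℕ) : Finset (Fin n → ℕ) := Fintype.piFinset fun _ => Icc 1 M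

def prodLeTuples (n M : ℕ) : Finset (Fin n → ℕ) := {f ∈ boxTuples n M | ∏ i, f i ≤ M}

theorem mem_boxTuples {n M : ℕ} {f : Fin n → ℕ} :
    f ∈ boxTuples n M ↔ ∀ i, 1 ≤ f i ∧ f i ≤ M := by
  simp [boxTuples]

theorem multDiv_eq_card (ν M k : ℕ) :
    multDiv ν M k = #{f ∈ boxTuples ν M | ∏ i, f i = k} := by
  rw [multDiv, ← Nat.card_eq_finsetCard]
  exact Nat.card_congr <| Equiv.subtypeEquivRight fun f => by simp [mem_boxTuples]

theorem prod_mem_Icc_of_mem_boxTuples {n M : ℕ} {f : Fin n → ℕ} (hf : f ∈ boxTuples n M) :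
    ∏ i, f i ∈ Icc 1 (M ^ n) := by
  rw [mem_boxTuples] at hf
  refine mem_Icc.mpr ⟨one_le_prod' fun i _ => (hf i).1, ?_⟩
  simpa using prod_le_pow_card univ f M fun i _ => (hf i).2

theorem mem_prodLeTuples {n M : ℕ} {f : Fin n → ℕ} :
    f ∈ prodLeTuples n M ↔ (∀ i, 0 < f i) ∧ ∏ i, f i ≤ M := by
  simp only [prodLeTuples, mem_filter, mem_boxTuples]
  refine ⟨fun h => ⟨fun i => (h.1 i).1, h.2⟩,
    fun ⟨hpos, hM⟩ => ⟨fun i => ⟨hpos i, ?_⟩, hM⟩⟩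
  exact (Nat.le_of_dvd (prod_pos fun j _ => hpos j) (dvd_prod_of_mem f (mem_univ i))).trans hM

theorem card_prodLeTuples_succ (n M : ℕ) :
    #(prodLeTuples (n + 1) M) = ∑ m ∈ Icc 1 M, #(prodLeTuples n (M / m)) := by
  rw [← card_sigma]
  refine card_nbij' (fun f => ⟨f 0, Fin.tail f⟩) (fun p => Fin.cons p.1 p.2) ?_ ?_
    (fun f _ => Fin.cons_self_tail f) (fun p _ => by simp)
  · intro f hf
    simp only [coe_sigma, Set.mem_sigma_iff, mem_coe, mem_Icc, mem_prodLeTuples,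
      Fin.forall_fin_succ, Fin.prod_univ_succ] at hf ⊢
    obtain ⟨⟨h₀, hpos⟩, hM⟩ := hf
    refine ⟨⟨h₀, le_of_mul_le_of_one_le_left hM (one_le_prod' fun i _ => hpos i)⟩, hpos,
      (Nat.le_div_iff_mul_le h₀).mpr (by rwa [mul_comm])⟩
  · rintro ⟨m, t⟩ h
    simp only [coe_sigma, Set.mem_sigma_iff, mem_coe, mem_Icc, mem_prodLeTuples] at h ⊢
    obtain ⟨⟨hm, -⟩, hpos, hM⟩ := h
    refine ⟨Fin.cases hm hpos, ?_⟩
    rw [Fin.prod_cons]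
    exact (Nat.le_div_iff_mul_le hm).mp hM |>.trans_eq' (mul_comm _ _)

theorem card_filter_prod_eq_prod_le (k n M : ℕ) :
    #{p ∈ boxTuples k M ×ˢ boxTuples n M | ∏ i, p.1 i = ∏ j, p.2 j} ≤
      #(prodLeTuples n M) ^ k := by
  rw [← Fintype.card_piFinset_const]
  refine card_le_card_of_surjOn (fun b => (fun i => ∏ j, b i j, fun j => ∏ i, b i j)) ?_
  rintro ⟨f, g⟩ hfg
  simp only [coe_filter, mem_product, mem_boxTuples, Set.mem_ofPred_eq] at hfg
  obtain ⟨⟨hf, hg⟩, hprod⟩ := hfg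
  have hg₀ : ∏ j, g j ≠ 0 := (prod_pos fun j _ => (hg j).1).ne'
  obtain ⟨b, hrow, hcol⟩ := exists_matrix_prod_rows_cols f g hprod hg₀
  refine ⟨b, Fintype.mem_piFinset.mpr fun i => mem_prodLeTuples.mpr ⟨fun j => ?_, ?_⟩, ?_⟩
  · exact Nat.pos_of_dvd_of_pos (hcol j ▸ dvd_prod_of_mem _ (mem_univ i)) (hg j).1
  · exact (hrow i).symm ▸ (hf i).2
  · simp [hrow, hcol]

theorem succ_mul_pow_mul_sub_le_pow_sub_pow {R : Type*} [CommRing R] [PartialOrder R]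
    [IsOrderedRing R] {x y : R} (hx : 0 ≤ x) (hxy : x ≤ y) (n : ℕ) :
    (n + 1) * x ^ n * (y - x) ≤ y ^ (n + 1) - x ^ (n + 1) := by
  rw [← geom_sum₂_mul]
  refine mul_le_mul_of_nonneg_right ?_ (sub_nonneg.mpr hxy)
  have hterm : ∀ i ∈ range (n + 1), x ^ n ≤ y ^ i * x ^ (n + 1 - 1 - i) := fun i hi => by
    calc x ^ n = x ^ i * x ^ (n + 1 - 1 - i) := by
          rw [← pow_add]; congr 1; have := mem_range.mp hi; omega
      _ ≤ y ^ i * x ^ (n + 1 - 1 - i) := by gcongr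
  simpa using card_nsmul_le_sum _ _ _ hterm

theorem inv_add_one_le_log_add_one_sub_log {x : ℝ} (hx : 0 < x) :
    (x + 1)⁻¹ ≤ log (x + 1) - log x := by
  have h := one_sub_inv_le_log_of_pos (x := (x + 1) / x) (by positivity)
  rwa [log_div (by positivity) hx.ne', inv_div, one_sub_div (by positivity), add_sub_cancel_left,
    one_div] at h

theorem sum_Icc_pow_sub_log_div_le_telescope (n : ℕ) {A : ℝ} {N : ℕ} (hN : 1 ≤ N)
    (hA : log N ≤ A) :
    ∑ m ∈ Icc 1 N, (A - log m) ^ n / m ≤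
      A ^ n + (A ^ (n + 1) - (A - log N) ^ (n + 1)) / (n + 1) := by
  induction N, hN using Nat.le_induction with
  | base => simp
  | succ N hN ih =>
    push_cast at hA ⊢
    have hN' : (0 : ℝ) < N := by exact_mod_cast hN
    have hlog := inv_add_one_le_log_add_one_sub_log hN'
    have hinv : 0 < ((N : ℝ) + 1)⁻¹ := by positivity
    set x := A - log (N + 1)
    set y := A - log N
    have hx : 0 ≤ x := sub_nonneg.mpr hA
    have hxy : x ≤ y := by linarith
    have hstep : x ^ n / (N + 1) ≤ (y ^ (n + 1) - x ^ (n + 1)) / (n + 1) := by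
      rw [le_div_iff₀ (by positivity)]
      calc x ^ n / (N + 1) * (n + 1) = (n + 1) * x ^ n * ((N : ℝ) + 1)⁻¹ := by ring
        _ ≤ (n + 1) * x ^ n * (y - x) := by gcongr; linarith
        _ ≤ _ := succ_mul_pow_mul_sub_le_pow_sub_pow hx hxy n
    rw [sum_Icc_succ_top (by omega)]
    push_cast
    calc _ ≤ A ^ n + (A ^ (n + 1) - y ^ (n + 1)) / (n + 1) +
          (y ^ (n + 1) - x ^ (n + 1)) / (n + 1) :=
          add_le_add (ih (by linarith [log_le_log hN' (by linarith : (N : ℝ) ≤ N + 1)])) hstep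
      _ = _ := by ring

theorem sum_Icc_pow_sub_log_div_le (n : ℕ) {A : ℝ} {N : ℕ} (hN : 1 ≤ N) (hA : log N ≤ A) :
    ∑ m ∈ Icc 1 N, (A - log m) ^ n / m ≤ (A + 1) ^ (n + 1) / (n + 1) := by
  have hA₀ : 0 ≤ A := (log_nonneg (by exact_mod_cast hN)).trans hA
  have hbernoulli :=
    succ_mul_pow_mul_sub_le_pow_sub_pow hA₀ (le_add_of_nonneg_right zero_le_one) n
  have hrest : 0 ≤ (A - log N) ^ (n + 1) := pow_nonneg (sub_nonneg.mpr hA) _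
  calc _ ≤ A ^ n + (A ^ (n + 1) - (A - log N) ^ (n + 1)) / (n + 1) :=
        sum_Icc_pow_sub_log_div_le_telescope n hN hA
    _ ≤ ((n + 1) * A ^ n * (A + 1 - A) + A ^ (n + 1)) / (n + 1) := by
        rw [add_sub_cancel_left, mul_one, add_div, mul_div_cancel_left₀ _ (by positivity)]
        gcongr
        linarith
    _ ≤ (A + 1) ^ (n + 1) / (n + 1) := by gcongr; linarith

theorem card_prodLeTuples_floor_le (n : ℕ) {x : ℝ} (hx : 1 ≤ x) :
    (#(prodLeTuples n ⌊x⌋₊) : ℝ) ≤ x * (log x + n) ^ n / n ! := by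
  induction n generalizing x with
  | zero =>
    have : #(prodLeTuples 0 ⌊x⌋₊) ≤ 1 :=
      card_le_one.mpr fun a _ b _ => Subsingleton.elim a b
    simpa using (Nat.cast_le.mpr this).trans (by exact_mod_cast hx : ((1 : ℕ) : ℝ) ≤ x)
  | succ n ih =>
    have hN : 1 ≤ ⌊x⌋₊ := (Nat.one_le_floor_iff x).mpr hx
    have hterm : ∀ m ∈ Icc 1 ⌊x⌋₊,
        (#(prodLeTuples n (⌊x⌋₊ / m)) : ℝ) ≤ x / n ! * ((log x + n - log m) ^ n / m) := by
      intro m hm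
      have hm₀ : (0 : ℝ) < m := by exact_mod_cast (mem_Icc.mp hm).1
      have hmx : (m : ℝ) ≤ x := (Nat.le_floor_iff (by linarith)).mp (mem_Icc.mp hm).2
      rw [← Nat.floor_div_natCast]
      calc _ ≤ x / m * (log (x / m) + n) ^ n / n ! := ih ((one_le_div hm₀).mpr hmx)
        _ = _ := by rw [log_div (by positivity) hm₀.ne']; ring
    have hlog : log ⌊x⌋₊ ≤ log x + n :=
      (log_le_log (by exact_mod_cast hN) (Nat.floor_le (by linarith))).trans
        (le_add_of_nonneg_right n.cast_nonneg)
    calc (#(prodLeTuples (n + 1) ⌊x⌋₊) : ℝ)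
        = ∑ m ∈ Icc 1 ⌊x⌋₊, (#(prodLeTuples n (⌊x⌋₊ / m)) : ℝ) := by
          rw [card_prodLeTuples_succ]; push_cast; rfl
      _ ≤ ∑ m ∈ Icc 1 ⌊x⌋₊, x / n ! * ((log x + n - log m) ^ n / m) := sum_le_sum hterm
      _ = x / n ! * ∑ m ∈ Icc 1 ⌊x⌋₊, (log x + n - log m) ^ n / m := by rw [mul_sum]
      _ ≤ x / n ! * ((log x + n + 1) ^ (n + 1) / (n + 1)) := by
          gcongr
          exact sum_Icc_pow_sub_log_div_le n hN hlog
      _ = x * (log x + ↑(n + 1)) ^ (n + 1) / (n + 1)! := by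
          push_cast [Nat.factorial_succ]
          field_simp
          ring

theorem pow_div_factorial_le_exp_one_mul_div_pow (n : ℕ) {a : ℝ} (ha : 0 ≤ a) :
    a ^ n / n ! ≤ (exp 1 * a / n) ^ n := by
  rcases n.eq_zero_or_pos with rfl | hn
  · simp
  have hn' : (0 : ℝ) < n := by exact_mod_cast hn
  calc a ^ n / n ! = (n : ℝ) ^ n / n ! * (a / n) ^ n := by rw [div_pow]; field_simp
    _ ≤ exp n * (a / n) ^ n := by gcongr; exact pow_div_factorial_le_exp _ n.cast_nonneg n
    _ = (exp 1 * a / n) ^ n := by rw [← exp_one_pow, ← mul_pow, mul_div_assoc]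

theorem multDiv_sq_sum_bound :
    ∀ M ν : ℕ, 0 < M → 0 < ν →
      (∑ k ∈ Finset.Icc 1 (M ^ ν), (multDiv ν M k : ℝ) ^ 2) ≤
        (M : ℝ) ^ ν * (Real.exp 1 * Real.log M / ν + Real.exp 1) ^ (ν ^ 2) := by
  intro M ν hM hν
  have hlogM : 0 ≤ log M := log_nonneg (by exact_mod_cast hM)
  have hcollisions := sum_sq_card_fiber_eq_card_filter
    (s := boxTuples ν M) (g := fun f => ∏ i, f i) fun _ => prod_mem_Icc_of_mem_boxTuples
  calc ∑ k ∈ Icc 1 (M ^ ν), (multDiv ν M k : ℝ) ^ 2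
      = (#{p ∈ boxTuples ν M ×ˢ boxTuples ν M | ∏ i, p.1 i = ∏ j, p.2 j} : ℝ) := by
        simp_rw [multDiv_eq_card]; exact_mod_cast hcollisions
    _ ≤ (#(prodLeTuples ν M) : ℝ) ^ ν := by exact_mod_cast card_filter_prod_eq_prod_le ν ν M
    _ ≤ (M * (log M + ν) ^ ν / ν !) ^ ν := by
        gcongr
        simpa using card_prodLeTuples_floor_le ν (x := M) (by exact_mod_cast hM)
    _ ≤ (M * (exp 1 * (log M + ν) / ν) ^ ν) ^ ν := by
        rw [mul_div_assoc]
        gcongr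
        exact pow_div_factorial_le_exp_one_mul_div_pow ν (by positivity)
    _ = (M : ℝ) ^ ν * (exp 1 * log M / ν + exp 1) ^ (ν ^ 2) := by
        rw [mul_pow, ← pow_mul, ← sq]
        congr 2
        field_simp
end

section
/- There is an absolute constant C such that the following holds. Let q be a prime power, let R be an integer with 0 < R < 2R < 2√q, let N ≥ 1 be an integer, and let α_1, …, α_N be complex numbers. Then Σ_{R < t ≤ 2R} Σ_{a=1, gcd(a,Δ(t))=1}^{Δ(t)} |T(a/Δ(t))|² ≤ C · ( q² + N ) · Z. -/
open Finset

/-- `e(x) = exp(2πix)`. -/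
noncomputable def eAdd (x : ℝ) : ℂ := Complex.exp (2 * Real.pi * Complex.I * x)

/-- `Δ(t) = 4q - t²`. -/
def Del (q t : ℕ) : ℕ := 4 * q - t ^ 2

/-!
The fractions `a / Δ(t)` with `gcd(a, Δ(t)) = 1` are reduced fractions whose denominators are
distinct (`t ↦ Δ(t)` is injective) and at most `4q`, so they are `(16q²)⁻¹`-separated modulo `1`,
and the classical large sieve bounds the sum by `8 (N + 16q²) Z`.

The large sieve is proved by duality. For `G(y) = ∑ₚ bₚ e(y xₚ)`, the sum `∑_{n ≤ N} |G(n)|²`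
is dominated by a multiple of the Fejér average `L⁻¹ ∑_{u,v < L} |G(u - v)|²`, which equals
`L⁻¹ ∑_{p,q} bₚ b̄_q |∑_{u < L} e(u (xₚ - x_q))|²`. The diagonal contributes `L²`; an off-diagonal
term is at most `1 / (4 ‖xₚ - x_q‖²)`, and over `δ`-separated points these sum to `O(δ⁻²)`.
-/

open Real ComplexConjugate

lemma eAdd_add (x y : ℝ) : eAdd (x + y) = eAdd x * eAdd y := by
  simp only [eAdd, ← Complex.exp_add, Complex.ofReal_add]
  ring_nf

lemma eAdd_natCast_mul (n : ℕ) (x : ℝ) : eAdd (n * x) = eAdd x ^ n := by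
  rw [eAdd, eAdd, ← Complex.exp_nat_mul]
  push_cast
  ring_nf

lemma eAdd_intCast (m : ℤ) : eAdd m = 1 := by
  rw [eAdd, ← Complex.exp_int_mul_two_pi_mul_I m, Complex.ofReal_intCast]
  ring_nf

lemma eAdd_sub_intCast (x : ℝ) (m : ℤ) : eAdd (x - m) = eAdd x := by
  rw [sub_eq_add_neg, eAdd_add, ← Int.cast_neg, eAdd_intCast, mul_one]

lemma norm_eAdd (x : ℝ) : ‖eAdd x‖ = 1 := by
  simp [eAdd, Complex.norm_exp]

lemma conj_eAdd (x : ℝ) : starRingEnd ℂ (eAdd x) = eAdd (-x) := by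
  rw [eAdd, eAdd, ← Complex.exp_conj]
  simp only [map_mul, map_ofNat, Complex.conj_ofReal, Complex.conj_I, Complex.ofReal_neg]
  ring_nf

lemma norm_eAdd_sub_one (x : ℝ) : ‖eAdd x - 1‖ = 2 * |sin (π * x)| := by
  have h := Complex.norm_exp_I_mul_ofReal_sub_one (2 * π * x)
  rw [show 2 * π * x / 2 = π * x by ring, norm_mul, Real.norm_two, Real.norm_eq_abs] at h
  rw [← h, eAdd]
  push_cast
  ring_nf

lemma four_mul_abs_le_norm_eAdd_sub_one {x : ℝ} (hx : |x| ≤ 1 / 2) :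
    4 * |x| ≤ ‖eAdd x - 1‖ := by
  have hπx : |π * x| ≤ π / 2 := by
    rw [abs_mul, abs_of_pos pi_pos]
    nlinarith [pi_pos]
  have := mul_abs_le_abs_sin hπx
  rw [abs_mul, abs_of_pos pi_pos, ← mul_assoc, div_mul_cancel₀ _ pi_ne_zero] at this
  rw [norm_eAdd_sub_one]
  linarith

lemma norm_sum_range_eAdd_sq_le (L : ℕ) {θ : ℝ} (hθ : θ - round θ ≠ 0) :
    ‖∑ u ∈ range L, eAdd (u * θ)‖ ^ 2 ≤ 1 / (4 * (θ - round θ) ^ 2) := by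
  set t := θ - round θ
  set z := eAdd θ
  have hz : 4 * |t| ≤ ‖z - 1‖ := by
    rw [show z = eAdd t from (eAdd_sub_intCast θ _).symm]
    exact four_mul_abs_le_norm_eAdd_sub_one (abs_sub_round θ)
  have hgeom : (∑ u ∈ range L, eAdd (u * θ)) * (z - 1) = z ^ L - 1 := by
    simp only [eAdd_natCast_mul]
    exact geom_sum_mul z L
  have hnum : ‖z ^ L - 1‖ ≤ 2 := by
    calc ‖z ^ L - 1‖ ≤ ‖z ^ L‖ + ‖(1 : ℂ)‖ := norm_sub_le _ _
      _ = 2 := by rw [norm_pow, norm_eAdd]; norm_num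
  have ht : 0 < |t| := abs_pos.mpr hθ
  have hbound : ‖∑ u ∈ range L, eAdd (u * θ)‖ * (2 * |t|) ≤ 1 := by
    have := norm_mul (∑ u ∈ range L, eAdd (u * θ)) (z - 1)
    rw [hgeom] at this
    nlinarith [norm_nonneg (∑ u ∈ range L, eAdd (u * θ))]
  rw [le_div_iff₀ (by positivity), ← sq_abs t]
  calc _ = (‖∑ u ∈ range L, eAdd (u * θ)‖ * (2 * |t|)) ^ 2 := by ring
    _ ≤ 1 := pow_le_one₀ (by positivity) hbound

lemma hasSum_one_div_intCast_sq : HasSum (fun k : ℤ ↦ 1 / (k : ℝ) ^ 2) (π ^ 2 / 3) := by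
  have hpos := (hasSum_nat_add_iff' 1).mpr hasSum_zeta_two
  simp only [range_one, sum_singleton, CharP.cast_eq_zero, zero_pow two_ne_zero, div_zero,
    sub_zero] at hpos
  have hneg : HasSum (fun n : ℕ ↦ 1 / ((-(n + 1 : ℤ) : ℤ) : ℝ) ^ 2) (π ^ 2 / 6) := by
    convert hpos using 2 with n
    · rfl
    · push_cast
      ring
  convert HasSum.of_nat_of_neg_add_one (f := fun k : ℤ ↦ 1 / (k : ℝ) ^ 2)
    (by simpa using hasSum_zeta_two) hneg using 1
  ring

lemma sum_one_div_intCast_sq_le (T : Finset ℤ) : ∑ k ∈ T, 1 / (k : ℝ) ^ 2 ≤ 4 := by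
  have hπ : π ^ 2 / 3 ≤ 4 := by nlinarith [pi_lt_d2, pi_pos]
  exact (sum_le_hasSum T (fun _ _ ↦ by positivity) hasSum_one_div_intCast_sq).trans hπ

lemma sum_one_div_sq_le_of_separated {ι : Type*} {S : Finset ι} {v : ι → ℝ} {δ : ℝ}
    (hδ : 0 < δ) (hv : ∀ p ∈ S, δ ≤ |v p|)
    (hsep : ∀ p ∈ S, ∀ q ∈ S, p ≠ q → δ ≤ |v p - v q|) :
    ∑ p ∈ S, 1 / v p ^ 2 ≤ 16 / δ ^ 2 := by
  -- Rounding `v / δ` injects `S` into `ℤ ∖ {0}`, with `|v p| ≥ δ |k p| / 2`.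
  set k : ι → ℤ := fun p ↦ round (v p / δ)
  have hk_inj : Set.InjOn k S := by
    intro p hp q hq hpq
    by_contra hne
    have h := Int.abs_sub_lt_one_of_floor_eq_floor (by simpa only [k, round_eq] using hpq)
    rw [add_sub_add_right_eq_sub, ← sub_div, abs_div, abs_of_pos hδ, div_lt_one hδ] at h
    exact (hsep p hp q hq hne).not_gt h
  have hterm : ∀ p ∈ S, 1 / v p ^ 2 ≤ 4 / δ ^ 2 * (1 / (k p : ℝ) ^ 2) := by
    intro p hp
    have hround := abs_sub_round (v p / δ)
    have hy : 1 ≤ |v p / δ| := by rw [abs_div, abs_of_pos hδ, one_le_div hδ]; exact hv p hp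
    have hk : |(k p : ℝ)| ≤ 2 * |v p / δ| := by
      have := abs_sub_abs_le_abs_sub (k p : ℝ) (v p / δ)
      rw [abs_sub_comm] at this
      linarith
    have hk0 : (k p : ℝ) ≠ 0 := by
      intro h0
      rw [h0, sub_zero] at hround
      linarith
    rw [abs_div, abs_of_pos hδ, mul_div_assoc', le_div_iff₀ hδ] at hk
    have hv0 : 0 < |v p| := hδ.trans_le (hv p hp)
    have hsq := pow_le_pow_left₀ (by positivity) hk 2
    rw [← sq_abs (v p), ← sq_abs (k p : ℝ), div_mul_div_comm, mul_one,
      div_le_div_iff₀ (pow_pos hv0 2) (by positivity)]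
    nlinarith
  calc ∑ p ∈ S, 1 / v p ^ 2 ≤ ∑ p ∈ S, 4 / δ ^ 2 * (1 / (k p : ℝ) ^ 2) := sum_le_sum hterm
    _ = 4 / δ ^ 2 * ∑ j ∈ S.image k, 1 / (j : ℝ) ^ 2 := by rw [sum_image hk_inj, mul_sum]
    _ ≤ 4 / δ ^ 2 * 4 := by gcongr; exact sum_one_div_intCast_sq_le _
    _ = 16 / δ ^ 2 := by ring

lemma sub_mul_sum_le_sum_sum_sub (g : ℝ → ℝ) (hg : ∀ y, 0 ≤ g y) (N L : ℕ) :
    ((L - N : ℕ) : ℝ) * ∑ n ∈ Icc 1 N, g n ≤ ∑ u ∈ range L, ∑ v ∈ range L, g ((u : ℝ) - v) := by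
  have hwindow : ∀ v ∈ range (L - N), ∑ n ∈ Icc 1 N, g n ≤ ∑ u ∈ range L, g ((u : ℝ) - v) := by
    intro v hv
    rw [mem_range] at hv
    calc ∑ n ∈ Icc 1 N, g n = ∑ u ∈ (Icc 1 N).map (addRightEmbedding v), g ((u : ℝ) - v) := by
          rw [sum_map]
          simp only [addRightEmbedding_apply, Nat.cast_add, add_sub_cancel_right]
      _ ≤ ∑ u ∈ range L, g ((u : ℝ) - v) := by
          refine sum_le_sum_of_subset_of_nonneg ?_ fun _ _ _ ↦ hg _
          intro u hu
          simp only [mem_map, mem_Icc, addRightEmbedding_apply] at hu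
          obtain ⟨n, ⟨-, hn⟩, rfl⟩ := hu
          rw [mem_range]
          omega
  rw [sum_comm]
  calc ((L - N : ℕ) : ℝ) * ∑ n ∈ Icc 1 N, g n = ∑ v ∈ range (L - N), ∑ n ∈ Icc 1 N, g n := by
        rw [sum_const, card_range, nsmul_eq_mul]
    _ ≤ ∑ v ∈ range (L - N), ∑ u ∈ range L, g ((u : ℝ) - v) := sum_le_sum hwindow
    _ ≤ ∑ v ∈ range L, ∑ u ∈ range L, g ((u : ℝ) - v) :=
        sum_le_sum_of_subset_of_nonneg (range_subset_range.mpr (Nat.sub_le L N))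
          fun _ _ _ ↦ sum_nonneg fun _ _ ↦ hg _

lemma sum_norm_sq_le_of_dual {ι κ : Type*} (s : Finset ι) (t : Finset κ) (K : ι → κ → ℂ)
    {Λ : ℝ} (hΛ : 0 ≤ Λ)
    (hdual : ∀ b : ι → ℂ, ∑ k ∈ t, ‖∑ i ∈ s, b i * K i k‖ ^ 2 ≤ Λ * ∑ i ∈ s, ‖b i‖ ^ 2)
    (a : κ → ℂ) : ∑ i ∈ s, ‖∑ k ∈ t, a k * K i k‖ ^ 2 ≤ Λ * ∑ k ∈ t, ‖a k‖ ^ 2 := by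
  set T : ι → ℂ := fun i ↦ ∑ k ∈ t, a k * K i k
  set G : κ → ℂ := fun k ↦ ∑ i ∈ s, conj (T i) * K i k
  set S2 := ∑ i ∈ s, ‖T i‖ ^ 2
  set Z := ∑ k ∈ t, ‖a k‖ ^ 2
  have hG : ∑ k ∈ t, ‖G k‖ ^ 2 ≤ Λ * S2 := by
    simpa only [Complex.norm_conj] using hdual fun i ↦ conj (T i)
  have hS2 : (S2 : ℂ) = ∑ k ∈ t, a k * G k := by
    simp only [S2, G, T, Complex.ofReal_sum, Complex.ofReal_pow, ← Complex.conj_mul', mul_sum]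
    rw [sum_comm]
    exact sum_congr rfl fun _ _ ↦ sum_congr rfl fun _ _ ↦ by ring
  have hCS : S2 ^ 2 ≤ Z * ∑ k ∈ t, ‖G k‖ ^ 2 := by
    have h := norm_sum_le t fun k ↦ a k * G k
    rw [← hS2, Complex.norm_real, Real.norm_of_nonneg (sum_nonneg fun _ _ ↦ by positivity)] at h
    simp only [norm_mul] at h
    exact (pow_le_pow_left₀ (sum_nonneg fun _ _ ↦ by positivity) h 2).trans
      (sum_mul_sq_le_sq_mul_sq t _ _)
  have hS2nn : 0 ≤ S2 := sum_nonneg fun _ _ ↦ by positivity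
  have hZnn : 0 ≤ Z := sum_nonneg fun _ _ ↦ by positivity
  nlinarith [mul_le_mul_of_nonneg_left hG hZnn, mul_nonneg hΛ hZnn]

lemma sum_sum_mul_mul_le_of_symm {ι : Type*} (S : Finset ι) (f : ι → ℝ) (K : ι → ι → ℝ)
    (hK0 : ∀ p q, 0 ≤ K p q) (hK : ∀ p q, K p q = K q p) :
    ∑ p ∈ S, ∑ q ∈ S, f p * f q * K p q ≤ ∑ p ∈ S, f p ^ 2 * ∑ q ∈ S, K p q := by
  have amgm : ∀ p q, f p * f q * K p q ≤ (f p ^ 2 * K p q + f q ^ 2 * K q p) / 2 := by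
    intro p q
    rw [hK q p]
    nlinarith [mul_nonneg (sq_nonneg (f p - f q)) (hK0 p q)]
  calc ∑ p ∈ S, ∑ q ∈ S, f p * f q * K p q
      ≤ ∑ p ∈ S, ∑ q ∈ S, (f p ^ 2 * K p q + f q ^ 2 * K q p) / 2 :=
        sum_le_sum fun p _ ↦ sum_le_sum fun q _ ↦ amgm p q
    _ = ∑ p ∈ S, f p ^ 2 * ∑ q ∈ S, K p q := by
        simp only [add_div, sum_add_distrib]
        rw [sum_comm (f := fun p q ↦ f q ^ 2 * K q p / 2), ← sum_add_distrib]
        simp only [mul_sum, ← sum_add_distrib]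
        exact sum_congr rfl fun _ _ ↦ sum_congr rfl fun _ _ ↦ by ring

lemma ofReal_norm_sum_mul_eAdd_sq {ι : Type*} (s : Finset ι) (c : ι → ℂ) (y : ι → ℝ) :
    ((‖∑ i ∈ s, c i * eAdd (y i)‖ ^ 2 : ℝ) : ℂ) =
      ∑ i ∈ s, ∑ j ∈ s, c i * conj (c j) * eAdd (y i - y j) := by
  rw [Complex.ofReal_pow, ← Complex.mul_conj', map_sum, sum_mul_sum]
  refine sum_congr rfl fun i _ ↦ sum_congr rfl fun j _ ↦ ?_
  rw [map_mul, conj_eAdd, sub_eq_add_neg, eAdd_add]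
  ring

lemma ofReal_sum_sum_norm_sq_sub_eq {ι : Type*} (S : Finset ι) (x : ι → ℝ) (b : ι → ℂ) (L : ℕ) :
    ((∑ u ∈ range L, ∑ v ∈ range L, ‖∑ p ∈ S, b p * eAdd (((u : ℝ) - v) * x p)‖ ^ 2 : ℝ) : ℂ) =
      ∑ p ∈ S, ∑ q ∈ S,
        b p * conj (b q) * ((‖∑ u ∈ range L, eAdd (u * (x p - x q))‖ ^ 2 : ℝ) : ℂ) := by
  have hF : ∀ θ : ℝ, ((‖∑ u ∈ range L, eAdd (u * θ)‖ ^ 2 : ℝ) : ℂ) =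
      ∑ u ∈ range L, ∑ v ∈ range L, eAdd (u * θ - v * θ) := by
    intro θ
    simpa using ofReal_norm_sum_mul_eAdd_sq (range L) 1 (fun u : ℕ ↦ u * θ)
  simp only [Complex.ofReal_sum, ofReal_norm_sum_mul_eAdd_sq, hF, mul_sum]
  refine (sum_congr rfl fun _ _ ↦ sum_comm).trans ?_
  refine (sum_congr rfl fun _ _ ↦ sum_congr rfl fun _ _ ↦ sum_comm).trans ?_
  rw [sum_comm]
  refine sum_congr rfl fun _ _ ↦ ?_
  rw [sum_comm]
  refine sum_congr rfl fun _ _ ↦ sum_congr rfl fun _ _ ↦ sum_congr rfl fun _ _ ↦ ?_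
  ring_nf

def SeparatedModOne {ι : Type*} (S : Finset ι) (x : ι → ℝ) (δ : ℝ) : Prop :=
  ∀ p ∈ S, ∀ q ∈ S, p ≠ q → ∀ m : ℤ, δ ≤ |x p - x q - m|

section LargeSieve

variable {ι : Type*} {S : Finset ι} {x : ι → ℝ} {M : ℕ}

lemma sum_norm_sum_range_eAdd_sq_le (hM : 0 < M) (hsep : SeparatedModOne S x (M : ℝ)⁻¹)
    (L : ℕ) {p : ι} (hp : p ∈ S) :
    ∑ q ∈ S, ‖∑ u ∈ range L, eAdd (u * (x p - x q))‖ ^ 2 ≤ L ^ 2 + 4 * M ^ 2 := by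
  classical
  set v : ι → ℝ := fun q ↦ x p - x q - round (x p - x q)
  have hv : ∀ q ∈ S.erase p, (M : ℝ)⁻¹ ≤ |v q| := fun q hq ↦
    hsep p hp q (mem_erase.mp hq).2 (mem_erase.mp hq).1.symm _
  have hv_sep : ∀ q ∈ S.erase p, ∀ r ∈ S.erase p, q ≠ r → (M : ℝ)⁻¹ ≤ |v q - v r| := by
    intro q hq r hr hqr
    have h := hsep r (mem_erase.mp hr).2 q (mem_erase.mp hq).2 hqr.symm
      (round (x p - x q) - round (x p - x r))
    convert h using 2
    push_cast
    ring
  have hoff : ∑ q ∈ S.erase p, ‖∑ u ∈ range L, eAdd (u * (x p - x q))‖ ^ 2 ≤ 4 * M ^ 2 :=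
    calc ∑ q ∈ S.erase p, ‖∑ u ∈ range L, eAdd (u * (x p - x q))‖ ^ 2
        ≤ ∑ q ∈ S.erase p, 1 / 4 * (1 / v q ^ 2) := by
          refine sum_le_sum fun q hq ↦ ?_
          have hvq : v q ≠ 0 := fun h0 ↦ by
            have := hv q hq
            rw [h0, abs_zero] at this
            exact (inv_pos.mpr (Nat.cast_pos.mpr hM)).not_ge this
          refine (norm_sum_range_eAdd_sq_le L hvq).trans_eq ?_
          rw [one_div_mul_one_div]
      _ ≤ 1 / 4 * (16 / ((M : ℝ)⁻¹) ^ 2) := by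
          rw [← mul_sum]
          gcongr
          exact sum_one_div_sq_le_of_separated (by positivity) hv hv_sep
      _ = 4 * M ^ 2 := by field_simp; ring
  have hdiag : ‖∑ u ∈ range L, eAdd (u * (x p - x p))‖ ^ 2 = L ^ 2 := by
    simp [eAdd]
  rw [← add_sum_erase _ _ hp, hdiag]
  linarith

lemma norm_sum_range_eAdd_neg (L : ℕ) (θ : ℝ) :
    ‖∑ u ∈ range L, eAdd (u * -θ)‖ = ‖∑ u ∈ range L, eAdd (u * θ)‖ := by
  rw [← Complex.norm_conj, map_sum]
  simp only [conj_eAdd, mul_neg, neg_neg]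

lemma sum_sum_norm_sq_sub_le (hM : 0 < M) (hsep : SeparatedModOne S x (M : ℝ)⁻¹) (L : ℕ)
    (b : ι → ℂ) :
    ∑ u ∈ range L, ∑ v ∈ range L, ‖∑ p ∈ S, b p * eAdd (((u : ℝ) - v) * x p)‖ ^ 2 ≤
      (L ^ 2 + 4 * M ^ 2) * ∑ p ∈ S, ‖b p‖ ^ 2 := by
  set K : ι → ι → ℝ := fun p q ↦ ‖∑ u ∈ range L, eAdd (u * (x p - x q))‖ ^ 2
  have hK : ∀ p q, K p q = K q p := fun p q ↦ by
    simp only [K, ← norm_sum_range_eAdd_neg L (x p - x q), neg_sub]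
  calc ∑ u ∈ range L, ∑ v ∈ range L, ‖∑ p ∈ S, b p * eAdd (((u : ℝ) - v) * x p)‖ ^ 2
      = ‖∑ p ∈ S, ∑ q ∈ S, b p * conj (b q) * (K p q : ℂ)‖ := by
        rw [← ofReal_sum_sum_norm_sq_sub_eq, Complex.norm_real,
          Real.norm_of_nonneg (sum_nonneg fun _ _ ↦ sum_nonneg fun _ _ ↦ by positivity)]
    _ ≤ ∑ p ∈ S, ∑ q ∈ S, ‖b p‖ * ‖b q‖ * K p q := by
        refine (norm_sum_le _ _).trans (sum_le_sum fun p _ ↦ (norm_sum_le _ _).trans_eq ?_)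
        simp only [norm_mul, Complex.norm_conj, Complex.norm_real,
          Real.norm_of_nonneg (sq_nonneg _), K]
    _ ≤ ∑ p ∈ S, ‖b p‖ ^ 2 * ∑ q ∈ S, K p q :=
        sum_sum_mul_mul_le_of_symm S _ K (fun _ _ ↦ sq_nonneg _) hK
    _ ≤ ∑ p ∈ S, ‖b p‖ ^ 2 * (L ^ 2 + 4 * M ^ 2) := sum_le_sum fun p hp ↦ by
        gcongr
        exact sum_norm_sum_range_eAdd_sq_le hM hsep L hp
    _ = (L ^ 2 + 4 * M ^ 2) * ∑ p ∈ S, ‖b p‖ ^ 2 := by rw [mul_sum]; simp only [mul_comm]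

theorem dual_large_sieve (hM : 0 < M) (hsep : SeparatedModOne S x (M : ℝ)⁻¹) (N : ℕ)
    (b : ι → ℂ) :
    ∑ n ∈ Icc 1 N, ‖∑ p ∈ S, b p * eAdd (n * x p)‖ ^ 2 ≤
      8 * (N + M) * ∑ p ∈ S, ‖b p‖ ^ 2 := by
  set L := 2 * (N + M)
  have hwindow := sub_mul_sum_le_sum_sum_sub (fun y ↦ ‖∑ p ∈ S, b p * eAdd (y * x p)‖ ^ 2)
    (fun _ ↦ sq_nonneg _) N L
  have hfejer := sum_sum_norm_sq_sub_le hM hsep L b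
  have hLN : ((L - N : ℕ) : ℝ) = N + 2 * M := by
    push_cast [L, Nat.cast_sub (by omega : N ≤ L)]
    ring
  rw [hLN] at hwindow
  refine le_of_mul_le_mul_left ?_ (by positivity : (0 : ℝ) < N + 2 * M)
  calc _ ≤ ((L : ℝ) ^ 2 + 4 * M ^ 2) * ∑ p ∈ S, ‖b p‖ ^ 2 := hwindow.trans hfejer
    _ ≤ _ := by
        rw [← mul_assoc]
        gcongr
        push_cast [L]
        nlinarith

theorem large_sieve (hM : 0 < M) (hsep : SeparatedModOne S x (M : ℝ)⁻¹) (N : ℕ) (α : ℕ → ℂ) :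
    ∑ p ∈ S, ‖∑ n ∈ Icc 1 N, α n * eAdd (n * x p)‖ ^ 2 ≤
      8 * (N + M) * ∑ n ∈ Icc 1 N, ‖α n‖ ^ 2 :=
  sum_norm_sq_le_of_dual S (Icc 1 N) (fun p n ↦ eAdd (n * x p)) (by positivity)
    (dual_large_sieve hM hsep N) α

end LargeSieve

lemma eq_and_sub_eq_of_mul_sub_mul_eq {a d a' d' : ℕ} (hd : 0 < d) (ha : a.Coprime d)
    (ha' : a'.Coprime d') {m : ℤ} (h : (a : ℤ) * d' - a' * d = m * d * d') :
    d = d' ∧ (a : ℤ) - a' = m * d := by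
  have hdd' : (d : ℤ) ∣ d' := (Nat.isCoprime_iff_coprime.mpr ha.symm).dvd_of_dvd_mul_left
    (show (d : ℤ) ∣ a * d' from ⟨a' + m * d', by linear_combination h⟩)
  have hd'd : (d' : ℤ) ∣ d := (Nat.isCoprime_iff_coprime.mpr ha'.symm).dvd_of_dvd_mul_left
    (show (d' : ℤ) ∣ a' * d from ⟨a - m * d, by linear_combination -h⟩)
  obtain rfl : d = d' := Nat.dvd_antisymm (Int.natCast_dvd_natCast.mp hdd')
    (Int.natCast_dvd_natCast.mp hd'd)
  refine ⟨rfl, mul_right_cancel₀ (Int.natCast_ne_zero.mpr hd.ne') ?_⟩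
  linear_combination h

/-- The pair `⟨d, a⟩` stands for the fraction `a / d`. -/
def reducedFractions (D : Finset ℕ) : Finset (Σ _ : ℕ, ℕ) :=
  D.sigma fun d ↦ (Icc 1 d).filter fun a ↦ a.gcd d = 1

lemma separatedModOne_reducedFractions {D : Finset ℕ} {Q : ℕ} (hD : D ⊆ Icc 1 Q) :
    SeparatedModOne (reducedFractions D) (fun p ↦ (p.2 : ℝ) / p.1) ((Q ^ 2 : ℕ) : ℝ)⁻¹ := by
  rintro ⟨d, a⟩ hp ⟨d', a'⟩ hp' hne m
  simp only [reducedFractions, mem_sigma, mem_filter, mem_Icc] at hp hp'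
  obtain ⟨hdD, ⟨ha1, had⟩, ha⟩ := hp
  obtain ⟨hd'D, ⟨ha1', had'⟩, ha'⟩ := hp'
  obtain ⟨hd1, hdQ⟩ := mem_Icc.mp (hD hdD)
  obtain ⟨hd1', hd'Q⟩ := mem_Icc.mp (hD hd'D)
  have hn : (a : ℤ) * d' - a' * d - m * d * d' ≠ 0 := by
    intro hn0
    obtain ⟨rfl, hsub⟩ :=
      eq_and_sub_eq_of_mul_sub_mul_eq (m := m) hd1 ha ha' (by linear_combination hn0)
    have hm : m = 0 := by
      have : (a : ℤ) - a' < d := by omega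
      have : -(d : ℤ) < a - a' := by omega
      rcases lt_trichotomy m 0 with hm | hm | hm
      · nlinarith
      · exact hm
      · nlinarith
    rw [hm, zero_mul, sub_eq_zero, Nat.cast_inj] at hsub
    exact hne (by rw [hsub])
  have hdd' : (0 : ℝ) < d * d' := mul_pos (by exact_mod_cast hd1) (by exact_mod_cast hd1')
  have hx : (a : ℝ) / d - a' / d' - m =
      (((a : ℤ) * d' - a' * d - m * d * d' : ℤ) : ℝ) / (d * d') := by
    push_cast
    field_simp
  rw [hx, abs_div, abs_of_pos hdd', le_div_iff₀ hdd', ← Int.cast_abs]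
  calc ((Q ^ 2 : ℕ) : ℝ)⁻¹ * (d * d') ≤ 1 := by
        rw [inv_mul_le_one₀ (Nat.cast_pos.mpr (pow_pos (by omega) 2))]
        exact_mod_cast (Nat.mul_le_mul hdQ hd'Q).trans_eq (sq Q).symm
    _ ≤ _ := by exact_mod_cast Int.one_le_abs hn

theorem large_sieve_reducedFractions {D : Finset ℕ} {Q : ℕ} (hQ : 0 < Q) (hD : D ⊆ Icc 1 Q)
    (N : ℕ) (α : ℕ → ℂ) :
    ∑ d ∈ D, ∑ a ∈ (Icc 1 d).filter (fun a ↦ a.gcd d = 1),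
        ‖∑ n ∈ Icc 1 N, α n * eAdd (n * ((a : ℝ) / d))‖ ^ 2 ≤
      8 * (N + Q ^ 2) * ∑ n ∈ Icc 1 N, ‖α n‖ ^ 2 := by
  have h := large_sieve (pow_pos hQ 2) (separatedModOne_reducedFractions hD) N α
  rw [reducedFractions, sum_sigma] at h
  exact_mod_cast h

lemma Del_mem_Icc {q t : ℕ} (ht : t ^ 2 < 4 * q) : Del q t ∈ Icc 1 (4 * q) := by
  rw [mem_Icc, Del]
  omega

lemma Del_injOn (q : ℕ) : Set.InjOn (Del q) {t | t ^ 2 < 4 * q} := by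
  intro t ht t' ht' h
  simp only [Set.mem_ofPred_eq, Del] at ht ht' h
  exact Nat.pow_left_injective two_ne_zero (show t ^ 2 = t' ^ 2 by omega)

theorem classical_large_sieve_quadratic_moduli :
    ∃ C : ℝ, ∀ q R N : ℕ, ∀ α : ℕ → ℂ,
      IsPrimePow q → 0 < R → (2 * R : ℝ) < 2 * Real.sqrt q → 1 ≤ N →
      ∑ t ∈ Finset.Ioc R (2 * R),
          ∑ a ∈ (Finset.Icc 1 (Del q t)).filter (fun a => Nat.gcd a (Del q t) = 1),
            ‖∑ n ∈ Finset.Icc 1 N, α n * eAdd (n * ((a : ℝ) / (Del q t)))‖ ^ 2 ≤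
        C * ((q ^ 2 + N : ℕ) : ℝ) * (∑ n ∈ Finset.Icc 1 N, ‖α n‖ ^ 2) := by
  refine ⟨128, fun q R N α _ _ hRq _ ↦ ?_⟩
  have hR2q : R ^ 2 < q := by
    have := (Real.lt_sqrt (Nat.cast_nonneg R)).mp (by linarith)
    exact_mod_cast this
  have ht : ∀ t ∈ Ioc R (2 * R), t ^ 2 < 4 * q := fun t ht ↦
    calc t ^ 2 ≤ (2 * R) ^ 2 := Nat.pow_le_pow_left (mem_Ioc.mp ht).2 2
      _ < 4 * q := by rw [mul_pow]; omega
  have hD : (Ioc R (2 * R)).image (Del q) ⊆ Icc 1 (4 * q) := by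
    simp only [image_subset_iff]
    exact fun t h ↦ Del_mem_Icc (ht t h)
  have h := large_sieve_reducedFractions (by nlinarith) hD N α
  rw [sum_image fun t h t' h' ↦ Del_injOn q (ht t h) (ht t' h')] at h
  refine h.trans (mul_le_mul_of_nonneg_right ?_ (sum_nonneg fun _ _ ↦ sq_nonneg _))
  push_cast
  nlinarith
end
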